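/- Let H be a critical 3-hypergraph with |V(H)| ≥ 5. If v ∈ V(H) has degree 2 in the primality graph 𝒫(H), then N_{𝒫(H)}(v), the set of neighbours of v in 𝒫(H), is a module of H − v. -/

import Mathlib

/-- `M` is a module of the hypergraph with vertex set `verts` and edge set `edges`. -/
def IsModule {α : Type*} [DecidableEq α] (verts : Finset α) (edges : Set (Finset α))
    (M : Finset α) : Prop :=
  M ⊆ verts ∧ ∀ e ∈ edges, (e ∩ M).Nonempty → (e \ M).Nonempty →
    ∃ m ∈ M, e ∩ M = {m} ∧ ∀ n ∈ M, (e \ {m}) ∪ {n} ∈ edges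

/-- `(verts, edges)` is a hypergraph: edges are nonempty subsets of `verts`. -/
def IsHypergraph {α : Type*} (verts : Finset α) (edges : Set (Finset α)) : Prop :=
  ∀ e ∈ edges, e ⊆ verts ∧ e.Nonempty

/-- `(verts, edges)` is a 3-hypergraph: edges are 3-element subsets of `verts`. -/
def Is3Hypergraph {α : Type*} (verts : Finset α) (edges : Set (Finset α)) : Prop :=
  ∀ e ∈ edges, e ⊆ verts ∧ e.card = 3

/-- Edges of the subhypergraph induced by `W`. -/
def induceEdges {α : Type*} (W : Finset α) (edges : Set (Finset α)) : Set (Finset α) :=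
  {e ∈ edges | e ⊆ W}

/-- A hypergraph is prime if it has at least 3 vertices and all its modules are trivial. -/
def IsPrime {α : Type*} [DecidableEq α] (verts : Finset α) (edges : Set (Finset α)) : Prop :=
  3 ≤ verts.card ∧ ∀ M, IsModule verts edges M → M = ∅ ∨ M = verts ∨ ∃ v, M = {v}

/-- A prime hypergraph is critical if removing any vertex destroys primality. -/
def IsCritical {α : Type*} [DecidableEq α] (verts : Finset α) (edges : Set (Finset α)) : Prop :=
  IsPrime verts edges ∧
    ∀ v ∈ verts, ¬ IsPrime (verts.erase v) (induceEdges (verts.erase v) edges)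

/-- Adjacency in the primality graph: `v ≠ w` and `H - {v, w}` is prime. -/
def PrimAdj {α : Type*} [DecidableEq α] (verts : Finset α) (edges : Set (Finset α))
    (v w : α) : Prop :=
  v ≠ w ∧ v ∈ verts ∧ w ∈ verts ∧
    IsPrime (verts \ {v, w}) (induceEdges (verts \ {v, w}) edges)

/-!
`H - v` is not prime, so it has a module `M` with `2 ≤ |M| < |V(H)| - 1`. For each neighbour `w`
of `v` in the primality graph, `M \ {w}` is a nonempty module of the prime hypergraph
`H - {v, w}`, hence a singleton or all of it. Since `|V(H)| ≥ 5`, this can only happen for two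
distinct neighbours `w₁, w₂` if `M = {w₁, w₂}`.
-/

theorem induceEdges_induceEdges {α : Type*} {V W : Finset α} {E : Set (Finset α)} (h : W ⊆ V) :
    induceEdges W (induceEdges V E) = induceEdges W E := by
  ext e
  exact ⟨fun ⟨⟨he, _⟩, heW⟩ => ⟨he, heW⟩, fun ⟨he, heW⟩ => ⟨⟨he, heW.trans h⟩, heW⟩⟩

section Modules

variable {α : Type*} [DecidableEq α] {V M : Finset α} {E : Set (Finset α)}

theorem exists_isModule_of_not_isPrime (h : ¬ IsPrime V E) (hV : 3 ≤ V.card) :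
    ∃ M, IsModule V E M ∧ 2 ≤ M.card ∧ M ≠ V := by
  simp only [IsPrime, hV, true_and, not_forall, not_or] at h
  obtain ⟨M, hM, hM0, hMV, hM1⟩ := h
  refine ⟨M, hM, ?_, hMV⟩
  by_contra! hlt
  interval_cases hc : M.card
  · exact hM0 (Finset.card_eq_zero.1 hc)
  · obtain ⟨x, rfl⟩ := Finset.card_eq_one.1 hc
    exact hM1 ⟨x, rfl⟩

theorem IsModule.erase_induce (w : α) (hM : IsModule V E M) :
    IsModule (V.erase w) (induceEdges (V.erase w) E) (M.erase w) := by
  refine ⟨Finset.erase_subset_erase w hM.1, fun e ⟨he, heV⟩ hin hout => ?_⟩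
  have hwe : w ∉ e := fun h => by simpa using heV h
  have hinter : e ∩ M.erase w = e ∩ M := by
    rw [Finset.inter_erase, Finset.erase_eq_of_notMem (fun h => hwe (Finset.mem_inter.1 h).1)]
  have hdiff : e \ M.erase w = e \ M := by
    ext x
    simp only [Finset.mem_sdiff, Finset.mem_erase]
    exact ⟨fun ⟨hx, hxM⟩ => ⟨hx, fun h => hxM ⟨ne_of_mem_of_not_mem hx hwe, h⟩⟩,
      fun ⟨hx, hxM⟩ => ⟨hx, fun h => hxM h.2⟩⟩
  rw [hinter] at hin ⊢
  rw [hdiff] at hout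
  obtain ⟨m, hm, hem, hswap⟩ := hM.2 e he hin hout
  have hme : m ∈ e := (Finset.mem_inter.1 (hem ▸ Finset.mem_singleton_self m)).1
  refine ⟨m, Finset.mem_erase.2 ⟨ne_of_mem_of_not_mem hme hwe, hm⟩, hem, fun n hn => ?_⟩
  refine ⟨hswap n (Finset.mem_of_mem_erase hn), Finset.union_subset ?_ ?_⟩
  · exact Finset.sdiff_subset.trans heV
  · exact Finset.singleton_subset_iff.2 (Finset.erase_subset_erase w hM.1 hn)

theorem IsModule.erase_eq_or_eq_singleton (hM : IsModule V E M) (hM2 : 2 ≤ M.card) {w : α}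
    (hp : IsPrime (V.erase w) (induceEdges (V.erase w) E)) :
    M.erase w = V.erase w ∨ ∃ x, M.erase w = {x} := by
  rcases hp.2 _ (hM.erase_induce w) with h | h | h
  · have := Finset.pred_card_le_card_erase (s := M) (a := w)
    rw [h, Finset.card_empty] at this
    omega
  · exact Or.inl h
  · exact Or.inr h

end Modules

namespace Finset

variable {α : Type*} [DecidableEq α] {s t : Finset α} {a b x : α}

theorem eq_erase_of_erase_eq_erase (hst : s ⊆ t) (hne : s ≠ t) (h : s.erase a = t.erase a) :
    s = t.erase a := by
  by_cases ha : a ∈ s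
  · exact absurd (by rw [← insert_erase ha, h, insert_erase (hst ha)]) hne
  · rwa [erase_eq_of_notMem ha] at h

theorem mem_of_erase_eq_singleton (hs : 2 ≤ #s) (h : s.erase a = {x}) : a ∈ s := by
  by_contra ha
  rw [erase_eq_of_notMem ha] at h
  simp [h] at hs

theorem eq_pair_of_erase_eq_singleton (ha : a ∈ s) (hb : b ∈ s) (hab : a ≠ b)
    (h : s.erase a = {x}) : s = {a, b} := by
  have hbx : b ∈ ({x} : Finset α) := h ▸ mem_erase.2 ⟨hab.symm, hb⟩
  rw [← insert_erase ha, h, mem_singleton.1 hbx]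

theorem erase_ne_erase_and_ne_singleton (ha : a ∈ t) (hab : a ≠ b) (ht : 4 ≤ #t) :
    ¬ ((t.erase a).erase b = t.erase b ∨ ∃ x, (t.erase a).erase b = {x}) := by
  rintro (h | ⟨x, hx⟩)
  · have : a ∈ (t.erase a).erase b := h ▸ mem_erase.2 ⟨hab, ha⟩
    simp at this
  · have := pred_card_le_card_erase (s := t.erase a) (a := b)
    rw [hx, card_singleton, card_erase_of_mem ha] at this
    omega

theorem eq_pair_of_erase_eq_erase_or_singleton (hst : s ⊆ t) (hne : s ≠ t) (hs : 2 ≤ #s)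
    (ht : 4 ≤ #t) (ha : a ∈ t) (hb : b ∈ t) (hab : a ≠ b)
    (h₁ : s.erase a = t.erase a ∨ ∃ x, s.erase a = {x})
    (h₂ : s.erase b = t.erase b ∨ ∃ x, s.erase b = {x}) : s = {a, b} := by
  rcases h₁ with h₁ | ⟨x, hx⟩
  · rw [eq_erase_of_erase_eq_erase hst hne h₁] at h₂
    exact absurd h₂ (erase_ne_erase_and_ne_singleton ha hab ht)
  rcases h₂ with h₂ | ⟨y, hy⟩
  · rw [eq_erase_of_erase_eq_erase hst hne h₂] at hx
    exact absurd (Or.inr ⟨x, hx⟩) (erase_ne_erase_and_ne_singleton hb hab.symm ht)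
  exact eq_pair_of_erase_eq_singleton (mem_of_erase_eq_singleton hs hx)
    (mem_of_erase_eq_singleton hs hy) hab hx

end Finset

section PrimAdj

variable {α : Type*} [DecidableEq α] {verts : Finset α} {edges : Set (Finset α)} {v w : α}

theorem PrimAdj.mem_erase (h : PrimAdj verts edges v w) : w ∈ verts.erase v :=
  Finset.mem_erase.2 ⟨h.1.symm, h.2.2.1⟩

theorem PrimAdj.isPrime_erase_erase (h : PrimAdj verts edges v w) :
    IsPrime ((verts.erase v).erase w)
      (induceEdges ((verts.erase v).erase w) (induceEdges (verts.erase v) edges)) := by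
  rw [induceEdges_induceEdges (Finset.erase_subset _ _), Finset.erase_right_comm,
    Finset.erase_eq verts w, ← Finset.sdiff_insert]
  exact h.2.2.2

end PrimAdj

theorem primality_degree_two_neighbours_module_general {α : Type*} [DecidableEq α]
    (verts : Finset α) (edges : Set (Finset α))
    (hc : IsCritical verts edges) (h5 : 5 ≤ verts.card)
    (v w₁ w₂ : α) (hw : w₁ ≠ w₂)
    (h1 : PrimAdj verts edges v w₁) (h2 : PrimAdj verts edges v w₂) :
    IsModule (verts.erase v) (induceEdges (verts.erase v) edges) {w₁, w₂} := by
  have hv : v ∈ verts := h1.2.1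
  have hcard : 4 ≤ (verts.erase v).card := by rw [Finset.card_erase_of_mem hv]; omega
  obtain ⟨M, hM, hM2, hMV⟩ := exists_isModule_of_not_isPrime (hc.2 v hv) (by omega)
  have hM_eq : M = {w₁, w₂} :=
    Finset.eq_pair_of_erase_eq_erase_or_singleton hM.1 hMV hM2 hcard h1.mem_erase h2.mem_erase hw
      (hM.erase_eq_or_eq_singleton hM2 h1.isPrime_erase_erase)
      (hM.erase_eq_or_eq_singleton hM2 h2.isPrime_erase_erase)
  exact hM_eq ▸ hM

theorem primality_degree_two_neighbours_module {α : Type*} [DecidableEq α]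
    (verts : Finset α) (edges : Set (Finset α)) (h3 : Is3Hypergraph verts edges)
    (hc : IsCritical verts edges) (h5 : 5 ≤ verts.card)
    (v w₁ w₂ : α) (hw : w₁ ≠ w₂)
    (h1 : PrimAdj verts edges v w₁) (h2 : PrimAdj verts edges v w₂)
    (hdeg : ∀ w, PrimAdj verts edges v w → w = w₁ ∨ w = w₂) :
    IsModule (verts.erase v) (induceEdges (verts.erase v) edges) {w₁, w₂} :=
  primality_degree_two_neighbours_module_general verts edges hc h5 v w₁ w₂ hw h1 h2
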